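/- arXiv:1708.03962 — 7 statements merged into one kernel-verified Lean document; each statement's English description precedes it below -/
import Mathlib

section
/- For any two edge sets E₁ and E₂ of a weighted graph with distinct edge weights, every edge of the minimum spanning forest of E₁ ∪ E₂ belongs to the union of the minimum spanning forest of E₁ and the minimum spanning forest of E₂; that is, MSF(E₁ ∪ E₂) ⊆ MSF(E₁) ∪ MSF(E₂). -/
/-- `e` is an edge of the minimum spanning forest of the edge set `E` with respect to
the (distinct) weights `w`: `e ∈ E` and, for every cycle of the graph with edge set `E`
that contains `e`, `e` is not the heaviest edge of that cycle. -/
def InMSF {V : Type*} (w : Sym2 V → ℝ) (E : Set (Sym2 V)) (e : Sym2 V) : Prop :=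
  e ∈ E ∧ ∀ (v : V) (c : (SimpleGraph.fromEdgeSet E).Walk v v),
    c.IsCycle → e ∈ c.edges → ∃ f ∈ c.edges, f ≠ e ∧ w e < w f

/-- For edge sets with distinct weights, `MSF(E₁ ∪ E₂) ⊆ MSF(E₁) ∪ MSF(E₂)`. -/
theorem msf_union_subset {V : Type*} (w : Sym2 V → ℝ) (hw : Function.Injective w)
    (E₁ E₂ : Set (Sym2 V)) :
    {e | InMSF w (E₁ ∪ E₂) e} ⊆ {e | InMSF w E₁ e} ∪ {e | InMSF w E₂ e} := by
  rintro e ⟨heE, hcyc⟩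
  have key : ∀ (E : Set (Sym2 V)), E ⊆ E₁ ∪ E₂ → e ∈ E → InMSF w E e := by
    intro E hE heE'
    refine ⟨heE', ?_⟩
    intro v c hc hec
    have hle : SimpleGraph.fromEdgeSet E ≤ SimpleGraph.fromEdgeSet (E₁ ∪ E₂) :=
      SimpleGraph.fromEdgeSet_mono hE
    have hsub : ∀ f ∈ c.edges, f ∈ (SimpleGraph.fromEdgeSet (E₁ ∪ E₂)).edgeSet := by
      intro f hf
      exact SimpleGraph.edgeSet_mono hle (c.edges_subset_edgeSet hf)
    have hc' := hc.transfer hsub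
    have hedges := c.edges_transfer hsub
    obtain ⟨f, hf, hfe, hwf⟩ := hcyc v (c.transfer _ hsub) hc' (by rwa [hedges])
    rw [hedges] at hf
    exact ⟨f, hf, hfe, hwf⟩
  rcases heE with h | h
  · exact Or.inl (key E₁ Set.subset_union_left h)
  · exact Or.inr (key E₂ Set.subset_union_right h)
end

section
/- Let G be a weighted graph with distinct edge weights and let G' be the multigraph obtained from G by contracting two nodes of G into one (keeping parallel edges). Then MSF(G') ⊆ MSF(G), identifying each edge of G' with its original edge in G. -/
/-- A cycle in a multigraph given by the endpoint map `ends : ι → Sym2 V`: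
`n ≥ 1` distinct edges `e i` together with distinct vertices `v i` (indices in
`ZMod n`) such that the edge `e i` joins `v i` and `v (i+1)`. -/
def IsMultiCycle {V ι : Type*} (ends : ι → Sym2 V) (n : ℕ)
    (e : ZMod n → ι) (v : ZMod n → V) : Prop :=
  1 ≤ n ∧ Function.Injective e ∧ Function.Injective v ∧
    ∀ i : ZMod n, ends (e i) = s(v i, v (i + 1))

/-- `x` belongs to the minimum spanning forest of the multigraph with endpoint map
`ends` and (distinct) weights `w`: for every cycle containing `x`, `x` is not the
heaviest edge of that cycle. -/
def InMultiMSF {V ι : Type*} (ends : ι → Sym2 V) (w : ι → ℝ) (x : ι) : Prop :=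
  ∀ (n : ℕ) (e : ZMod n → ι) (v : ZMod n → V), IsMultiCycle ends n e v →
    (∃ i, e i = x) → ∃ i, e i ≠ x ∧ w x < w (e i)

/-- Rotating a cycle. -/
lemma isMultiCycle_rot {V ι : Type*} (ends : ι → Sym2 V) {n : ℕ} {e : ZMod n → ι}
    {v : ZMod n → V} (h : IsMultiCycle ends n e v) (p : ZMod n) :
    IsMultiCycle ends n (fun i => e (i + p)) (fun i => v (i + p)) := by
  obtain ⟨h1, he, hv, hs⟩ := h
  refine ⟨h1, ?_, ?_, ?_⟩
  · intro i j hij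
    exact add_right_cancel (he hij)
  · intro i j hij
    exact add_right_cancel (hv hij)
  · intro i
    have := hs (i + p)
    rw [show i + p + 1 = i + 1 + p by ring] at this
    exact this

/-- The segment `0, 1, …, m` of a cycle in `G` whose endpoints are `a`, `b` (in
either order) becomes a cycle in the contraction `G'`. -/
lemma seg_lemma {V ι : Type*} [DecidableEq V]
    (ends : ι → Sym2 V) (w : ι → ℝ) (a b : V) (hab : a ≠ b) (x : ι)
    (H : InMultiMSF (fun i => (ends i).map (fun z => if z = b then a else z)) w x)
    (n : ℕ) (e : ZMod n → ι) (v : ZMod n → V) (hc : IsMultiCycle ends n e v)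
    (m : ℕ) (hm1 : 1 ≤ m) (hmn : m < n)
    (hv0 : v 0 = a ∨ v 0 = b) (hvm : v (m : ZMod n) = a ∨ v (m : ZMod n) = b)
    (k : ZMod n) (hk : e k = x) (hkm : k.val < m) :
    ∃ i, e i ≠ x ∧ w x < w (e i) := by
  haveI : NeZero n := ⟨by omega⟩
  haveI : NeZero m := ⟨by omega⟩
  obtain ⟨-, he, hv, hs⟩ := hc
  set f : V → V := fun z => if z = b then a else z with hf
  have hfa : f a = a := by simp [hf]
  have hfb : f b = a := by simp [hf]
  have hvcast : ∀ i : ZMod m, ((i.val : ℕ) : ZMod n).val = i.val :=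
    fun i => ZMod.val_cast_of_lt (lt_trans (ZMod.val_lt i) hmn)
  have h0m : (0 : ZMod n) ≠ ((m : ℕ) : ZMod n) := by
    intro h
    have := congrArg ZMod.val h
    rw [ZMod.val_zero, ZMod.val_cast_of_lt hmn] at this
    omega
  have hv0m : v 0 ≠ v ((m : ℕ) : ZMod n) := fun h => h0m (hv h)
  have hA : (v 0 = a ∧ v ((m:ℕ) : ZMod n) = b) ∨ (v 0 = b ∧ v ((m:ℕ) : ZMod n) = a) := by
    rcases hv0 with h1 | h1 <;> rcases hvm with h2 | h2 <;> simp_all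
  have hu : ∀ i : ZMod m, (v ((i.val : ℕ) : ZMod n) = a ∨ v ((i.val : ℕ) : ZMod n) = b) →
      i = 0 := by
    intro i hi
    have hcases : ((i.val : ℕ) : ZMod n) = 0 ∨ ((i.val : ℕ) : ZMod n) = ((m:ℕ) : ZMod n) := by
      rcases hA with ⟨h1, h2⟩ | ⟨h1, h2⟩ <;> rcases hi with h | h
      · exact Or.inl (hv (h.trans h1.symm))
      · exact Or.inr (hv (h.trans h2.symm))
      · exact Or.inr (hv (h.trans h2.symm))
      · exact Or.inl (hv (h.trans h1.symm))
    rcases hcases with h | h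
    · have := congrArg ZMod.val h
      rw [hvcast, ZMod.val_zero] at this
      exact ZMod.val_injective m (by rw [this, ZMod.val_zero])
    · have := congrArg ZMod.val h
      rw [hvcast, ZMod.val_cast_of_lt hmn] at this
      exact absurd this (Nat.ne_of_lt (ZMod.val_lt i))
  set E : ZMod m → ι := fun i => e ((i.val : ℕ) : ZMod n) with hE
  set Vv : ZMod m → V := fun i => f (v ((i.val : ℕ) : ZMod n)) with hV
  have hEinj : Function.Injective E := by
    intro i j hij
    have h2 := congrArg ZMod.val (he hij)
    rw [hvcast, hvcast] at h2
    exact ZMod.val_injective m h2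
  have hVinj : Function.Injective Vv := by
    intro i j hij
    simp only [hV, hf] at hij
    by_cases hi : v ((i.val : ℕ) : ZMod n) = b <;>
      by_cases hj : v ((j.val : ℕ) : ZMod n) = b
    · rw [hu i (Or.inr hi), hu j (Or.inr hj)]
    · rw [if_pos hi, if_neg hj] at hij
      rw [hu i (Or.inr hi), hu j (Or.inl hij.symm)]
    · rw [if_neg hi, if_pos hj] at hij
      rw [hu i (Or.inl hij), hu j (Or.inr hj)]
    · rw [if_neg hi, if_neg hj] at hij
      have h2 := congrArg ZMod.val (hv hij)
      rw [hvcast, hvcast] at h2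
      exact ZMod.val_injective m h2
  have hcyc : IsMultiCycle (fun i => (ends i).map f) m E Vv := by
    refine ⟨hm1, hEinj, hVinj, ?_⟩
    intro i
    show (ends (e _)).map f = s(Vv i, Vv (i + 1))
    rw [hs, Sym2.map_pair_eq]
    have hstep : f (v (((i.val : ℕ) : ZMod n) + 1)) = Vv (i + 1) := by
      have hi1 : (i + 1 : ZMod m) = (((i.val + 1 : ℕ)) : ZMod m) := by
        rw [Nat.cast_add, Nat.cast_one, ZMod.natCast_rightInverse i]
      by_cases hlast : i.val + 1 = m
      · have h0 : (i + 1 : ZMod m) = 0 := by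
          rw [hi1, hlast, ZMod.natCast_self]
        have hcg : (((i.val + 1 : ℕ)) : ZMod n) = ((m : ℕ) : ZMod n) :=
          congrArg (fun t : ℕ => ((t : ℕ) : ZMod n)) hlast
        have harg : (((i.val : ℕ) : ZMod n) + 1) = ((m : ℕ) : ZMod n) := by
          rw [← hcg]; push_cast; ring
        rw [h0, harg]
        simp only [hV, ZMod.val_zero, Nat.cast_zero]
        rcases hvm with h | h <;> rcases hv0 with h' | h' <;> rw [h, h'] <;>
          simp [hfa, hfb]
      · have hlt : i.val + 1 < m := lt_of_le_of_ne (ZMod.val_lt i) hlast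
        have hval : (i + 1 : ZMod m).val = i.val + 1 := by
          rw [hi1, ZMod.val_cast_of_lt hlt]
        have harg : (((i.val : ℕ) : ZMod n) + 1) = (((i + 1 : ZMod m).val : ℕ) : ZMod n) := by
          rw [hval]; push_cast; ring
        rw [harg]
    rw [← hstep]
  have hkmem : ∃ i, E i = x := by
    refine ⟨((k.val : ℕ) : ZMod m), ?_⟩
    show e _ = x
    rw [ZMod.val_cast_of_lt hkm, ZMod.natCast_rightInverse k]
    exact hk
  obtain ⟨i, hne, hlt⟩ := H m E Vv hcyc hkmem
  exact ⟨((i.val : ℕ) : ZMod n), hne, hlt⟩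

/-- Contracting two nodes `a` and `b` of a weighted (multi)graph `G` into one node
(keeping parallel edges, and identifying each edge of the contracted graph `G'` with
its original edge of `G`) yields `MSF(G') ⊆ MSF(G)`. -/
theorem msf_contract_subset {V ι : Type*} [DecidableEq V]
    (ends : ι → Sym2 V) (w : ι → ℝ) (hw : Function.Injective w) (a b : V) :
    ∀ x : ι,
      InMultiMSF (fun i => (ends i).map (fun z => if z = b then a else z)) w x →
      InMultiMSF ends w x := by
  intro x H n e v hc hx
  obtain ⟨k, hk⟩ := hx
  set f : V → V := fun z => if z = b then a else z with hf
  by_cases hinj : Function.Injective (fun i => f (v i))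
  · refine H n e (fun i => f (v i)) ⟨hc.1, hc.2.1, hinj, ?_⟩ ⟨k, hk⟩
    intro i
    show (ends (e i)).map f = _
    rw [hc.2.2.2 i, Sym2.map_pair_eq]
  · obtain ⟨h1, he, hv, hs⟩ := hc
    haveI : NeZero n := ⟨by omega⟩
    have hab : a ≠ b := by
      intro h
      subst h
      apply hinj
      have : (fun i => f (v i)) = v := by
        funext i
        by_cases h' : v i = a <;> simp [hf, h']
      rw [this]
      exact hv
    have hpq : ∃ p q : ZMod n, v p = a ∧ v q = b ∧ p ≠ q := by
      rw [Function.Injective] at hinj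
      push_neg at hinj
      obtain ⟨i, j, hij, hne⟩ := hinj
      simp only [hf] at hij
      by_cases hi : v i = b <;> by_cases hj : v j = b
      · exact absurd (hv (hi.trans hj.symm)) hne
      · rw [if_pos hi, if_neg hj] at hij
        exact ⟨j, i, hij.symm, hi, Ne.symm hne⟩
      · rw [if_neg hi, if_pos hj] at hij
        exact ⟨i, j, hij, hj, hne⟩
      · rw [if_neg hi, if_neg hj] at hij
        exact absurd (hv hij) hne
    obtain ⟨p, q, hp, hq, hpq⟩ := hpq
    set m' : ZMod n := q - p with hm'
    have hm'0 : m' ≠ 0 := sub_ne_zero.mpr (Ne.symm hpq)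
    have hm1 : 1 ≤ m'.val :=
      Nat.one_le_iff_ne_zero.mpr (fun h => hm'0 ((ZMod.val_eq_zero _).mp h))
    have hmn : m'.val < n := ZMod.val_lt m'
    have hmm : ((m'.val : ℕ) : ZMod n) = m' := ZMod.natCast_rightInverse m'
    have hcyc1 := isMultiCycle_rot ends ⟨h1, he, hv, hs⟩ p
    by_cases hcase : (k - p).val < m'.val
    · obtain ⟨i, hne, hlt⟩ := seg_lemma ends w a b hab x H n _ _ hcyc1 m'.val hm1 hmn
        (Or.inl (by show v (0 + p) = a; rw [zero_add]; exact hp))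
        (Or.inr (by show v (((m'.val : ℕ) : ZMod n) + p) = b
                    rw [hmm, hm', sub_add_cancel]; exact hq))
        (k - p) (by show e (k - p + p) = x; rw [sub_add_cancel]; exact hk) hcase
      exact ⟨i + p, hne, hlt⟩
    · have hcyc2 := isMultiCycle_rot ends hcyc1 m'
      have hk2 : (k - p - m').val = (k - p).val - m'.val := by
        have hcast : ((((k - p).val - m'.val : ℕ)) : ZMod n) = k - p - m' := by
          rw [Nat.cast_sub (not_lt.mp hcase), hmm, ZMod.natCast_rightInverse (k - p)]
        rw [← hcast, ZMod.val_cast_of_lt (by have := ZMod.val_lt (k - p); omega)]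
      obtain ⟨i, hne, hlt⟩ := seg_lemma ends w a b hab x H n _ _ hcyc2 (n - m'.val)
        (by omega) (by omega)
        (Or.inr (by show v (0 + m' + p) = b
                    rw [zero_add, hm', sub_add_cancel]; exact hq))
        (Or.inl (by show v ((((n - m'.val : ℕ)) : ZMod n) + m' + p) = a
                    have key : (((n - m'.val : ℕ) : ZMod n)) + m' = 0 := by
                      have h9 : (((n - m'.val : ℕ) : ZMod n)) + ((m'.val : ℕ) : ZMod n) = 0 := by
                        rw [← Nat.cast_add, Nat.sub_add_cancel (le_of_lt hmn),
                          ZMod.natCast_self]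
                      rwa [hmm] at h9
                    rw [key, zero_add]
                    exact hp))
        (k - p - m')
        (by show e (k - p - m' + m' + p) = x; rw [sub_add_cancel, sub_add_cancel]; exact hk)
        (by rw [hk2]; have := ZMod.val_lt (k - p); omega)
      exact ⟨i + m' + p, hne, hlt⟩
end

section
/- Let G = (V,E) be a graph with maximum degree Δ, and let 𝒫 be a partition of V such that for each part U ∈ 𝒫, the induced subgraph G[U] is connected and |U| ≤ s. Let G_𝒫 be the multigraph obtained from G by contracting each part U ∈ 𝒫 into a single node. If h(G) ≤ 1/(2s), then h(G_𝒫) ≤ 4 s² Δ · h(G). -/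
variable {V P : Type*}

noncomputable def gdeg (G : SimpleGraph V) (v : V) : ℕ := (G.neighborSet v).ncard

noncomputable def gcut (G : SimpleGraph V) (S : Set V) : ℕ :=
  {e ∈ G.edgeSet | ∃ u ∈ S, ∃ v ∈ Sᶜ, e = s(u, v)}.ncard

/-- the expansion `h(G)` of a simple graph: the minimum of `δ(S)/min(|S|,|V−S|)`
over nonempty proper cuts -/
noncomputable def expansion (G : SimpleGraph V) : ℝ :=
  sInf {x | ∃ S : Set V, S.Nonempty ∧ S ≠ Set.univ ∧
    x = (gcut G S : ℝ) / ((min S.ncard Sᶜ.ncard : ℕ) : ℝ)}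

/-- the expansion `h(G_𝒫)` of the multigraph obtained from `G` by contracting each
fiber of `c : V → P` into a single node (parallel edges kept): a cut `S ⊆ P` of the
contracted graph has `δ_{G_𝒫}(S) = δ_G(c⁻¹ S)` crossing edges. -/
noncomputable def contractedExpansion (G : SimpleGraph V) (c : V → P) : ℝ :=
  sInf {x | ∃ S : Set P, S.Nonempty ∧ S ≠ Set.univ ∧
    x = (gcut G (c ⁻¹' S) : ℝ) / ((min S.ncard Sᶜ.ncard : ℕ) : ℝ)}

/-!
Take a cut `S` of `G` attaining `h(G)` with `|S| ≤ |V - S|`, and let `T` be the set of parts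
lying inside `S`. A part meeting both `S` and `V - S` is connected, so it contains an edge
of `δ(S)`; hence at most `δ(S) ≤ |S|/(2s)` parts are split, and they cover at most `|S|/2`
vertices. So `T` and the parts inside `V - S` each cover at least `|S|/2` vertices, and
`min(|T|, |P - T|) ≥ |S|/(2s)`. An edge leaving `c⁻¹ T` either crosses `S` or is incident to
a split part, so `δ(c⁻¹ T) ≤ δ(S) + Δ s δ(S) ≤ 2 s Δ δ(S)`, and the ratio is at most
`4 s² Δ h(G)`.
-/

lemma Set.ncard_biUnion_le_mul {ι α : Type*} {t : Set ι} (ht : t.Finite) (f : ι → Set α)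
    {n : ℕ} (hf : ∀ i ∈ t, (f i).ncard ≤ n) : (⋃ i ∈ t, f i).ncard ≤ n * t.ncard := by
  calc (⋃ i ∈ t, f i).ncard = (⋃ i ∈ ht.toFinset, f i).ncard := by simp
    _ ≤ ∑ i ∈ ht.toFinset, (f i).ncard := Finset.set_ncard_biUnion_le _ _
    _ ≤ ∑ _i ∈ ht.toFinset, n := Finset.sum_le_sum fun i hi => hf i (by simpa using hi)
    _ = n * t.ncard := by rw [Finset.sum_const, smul_eq_mul, Set.ncard_eq_toFinset_card t ht,
        mul_comm]

def cutEdges (G : SimpleGraph V) (S : Set V) : Set (Sym2 V) :=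
  {e ∈ G.edgeSet | ∃ u ∈ S, ∃ v ∈ Sᶜ, e = s(u, v)}

lemma gcut_eq_ncard_cutEdges (G : SimpleGraph V) (S : Set V) :
    gcut G S = (cutEdges G S).ncard := rfl

lemma cutEdges_compl (G : SimpleGraph V) (S : Set V) : cutEdges G Sᶜ = cutEdges G S := by
  ext e
  simp only [cutEdges, Set.mem_ofPred_eq, compl_compl]
  constructor <;>
  · rintro ⟨he, u, hu, v, hv, rfl⟩
    exact ⟨he, v, hv, u, hu, Sym2.eq_swap⟩

lemma gcut_compl (G : SimpleGraph V) (S : Set V) : gcut G Sᶜ = gcut G S := by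
  rw [gcut_eq_ncard_cutEdges, cutEdges_compl, gcut_eq_ncard_cutEdges]

lemma cutEdges_subset_biUnion_incidenceSet (G : SimpleGraph V) (S : Set V) :
    cutEdges G S ⊆ ⋃ v ∈ S, G.incidenceSet v := by
  rintro _ ⟨he, u, hu, v, -, rfl⟩
  exact Set.mem_biUnion hu ⟨he, Sym2.mem_mk_left u v⟩

lemma ncard_incidenceSet_eq_gdeg (G : SimpleGraph V) (v : V) :
    (G.incidenceSet v).ncard = gdeg G v := by
  classical
  rw [gdeg, ← Nat.card_coe_set_eq, ← Nat.card_coe_set_eq]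
  exact Nat.card_congr (G.incidenceSetEquivNeighborSet v)

section MaxDegree

variable [Finite V] {G : SimpleGraph V} {Δ : ℕ}

lemma ncard_biUnion_incidenceSet_le (hΔ : ∀ v, gdeg G v ≤ Δ) (W : Set V) :
    (⋃ v ∈ W, G.incidenceSet v).ncard ≤ Δ * W.ncard :=
  Set.ncard_biUnion_le_mul W.toFinite _ fun v _ =>
    (ncard_incidenceSet_eq_gdeg G v).trans_le (hΔ v)

lemma gcut_le_mul_ncard (hΔ : ∀ v, gdeg G v ≤ Δ) (S : Set V) : gcut G S ≤ Δ * S.ncard :=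
  (Set.ncard_le_ncard (cutEdges_subset_biUnion_incidenceSet G S) (Set.toFinite _)).trans
    (ncard_biUnion_incidenceSet_le hΔ S)

end MaxDegree

lemma SimpleGraph.exists_adj_mem_notMem_of_connected_induce {G : SimpleGraph V} {A S : Set V}
    (hA : (G.induce A).Connected) {u v : V} (hu : u ∈ A) (hv : v ∈ A) (huS : u ∈ S)
    (hvS : v ∉ S) : ∃ x ∈ A, ∃ y ∈ A, G.Adj x y ∧ x ∈ S ∧ y ∉ S := by
  obtain ⟨w⟩ := hA.preconnected ⟨u, hu⟩ ⟨v, hv⟩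
  obtain ⟨d, -, hd₁, hd₂⟩ := w.exists_boundary_dart ((↑) ⁻¹' S : Set A) (by simpa using huS)
    (by simpa using hvS)
  exact ⟨d.fst, d.fst.2, d.snd, d.snd.2, d.adj, hd₁, hd₂⟩

def partsWithin (c : V → P) (S : Set V) : Set P := {p | c ⁻¹' {p} ⊆ S}

def splitParts (c : V → P) (S : Set V) : Set P := {p | ¬c ⁻¹' {p} ⊆ S ∧ ¬c ⁻¹' {p} ⊆ Sᶜ}

section Parts

variable (c : V → P) (S : Set V)

lemma splitParts_compl : splitParts c Sᶜ = splitParts c S := by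
  ext p
  simp only [splitParts, compl_compl, Set.mem_ofPred_eq, and_comm]

lemma subset_preimage_partsWithin_union_splitParts :
    S ⊆ c ⁻¹' (partsWithin c S ∪ splitParts c S) := by
  intro v hv
  by_cases h : c ⁻¹' {c v} ⊆ S
  · exact Or.inl h
  · exact Or.inr ⟨h, fun hc => hc rfl hv⟩

lemma cutEdges_preimage_partsWithin_subset (G : SimpleGraph V) :
    cutEdges G (c ⁻¹' partsWithin c S) ⊆
      cutEdges G S ∪ ⋃ v ∈ c ⁻¹' splitParts c S, G.incidenceSet v := by
  rintro _ ⟨he, u, hu, v, hv, rfl⟩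
  have huS : u ∈ S := hu rfl
  by_cases hvS : v ∈ S
  · exact Or.inr (Set.mem_biUnion (x := v) ⟨hv, fun h => h rfl hvS⟩ ⟨he, Sym2.mem_mk_right u v⟩)
  · exact Or.inl ⟨he, u, huS, v, hvS, rfl⟩

variable {c}

lemma partsWithin_compl_subset_compl (hc : Function.Surjective c) :
    partsWithin c Sᶜ ⊆ (partsWithin c S)ᶜ := by
  intro p hp hpS
  obtain ⟨v, rfl⟩ := hc p
  exact hp rfl (hpS rfl)

variable [Finite V] {G : SimpleGraph V} {s Δ : ℕ}

lemma ncard_le_mul_ncard_of_subset_preimage [Finite P] (hsize : ∀ p, (c ⁻¹' {p}).ncard ≤ s)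
    {X : Set V} {Q : Set P} (hX : X ⊆ c ⁻¹' Q) : X.ncard ≤ s * Q.ncard := by
  have hcover : X ⊆ ⋃ p ∈ Q, c ⁻¹' {p} := fun v hv => Set.mem_biUnion (hX hv) rfl
  exact (Set.ncard_le_ncard hcover (Set.toFinite _)).trans
    (Set.ncard_biUnion_le_mul Q.toFinite _ fun p _ => hsize p)

lemma ncard_splitParts_le_gcut (hconn : ∀ p, (G.induce (c ⁻¹' {p})).Connected) :
    (splitParts c S).ncard ≤ gcut G S := by
  have hsub : splitParts c S ⊆ (fun e : Sym2 V => c e.out.1) '' cutEdges G S := by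
    rintro p ⟨hpS, hpSc⟩
    obtain ⟨u, hu, huS⟩ := Set.not_subset.mp hpSc
    obtain ⟨v, hv, hvS⟩ := Set.not_subset.mp hpS
    obtain ⟨x, hx, y, hy, hxy, hxS, hyS⟩ :=
      G.exists_adj_mem_notMem_of_connected_induce (hconn p) hu hv (not_not.mp huS) hvS
    refine ⟨s(x, y), ⟨hxy, x, hxS, y, hyS, rfl⟩, ?_⟩
    rcases Sym2.mem_iff.mp (Sym2.out_fst_mem s(x, y)) with h | h <;> simp only [h]
    exacts [hx, hy]
  exact (Set.ncard_le_ncard hsub (Set.toFinite _)).trans (Set.ncard_image_le (Set.toFinite _))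

lemma gcut_preimage_partsWithin_le [Finite P] (hΔ : ∀ v, gdeg G v ≤ Δ)
    (hsize : ∀ p, (c ⁻¹' {p}).ncard ≤ s) :
    gcut G (c ⁻¹' partsWithin c S) ≤ gcut G S + Δ * (s * (splitParts c S).ncard) :=
  calc gcut G (c ⁻¹' partsWithin c S)
      ≤ (cutEdges G S ∪ ⋃ v ∈ c ⁻¹' splitParts c S, G.incidenceSet v).ncard :=
        Set.ncard_le_ncard (cutEdges_preimage_partsWithin_subset c S G) (Set.toFinite _)
    _ ≤ gcut G S + Δ * (c ⁻¹' splitParts c S).ncard :=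
        (Set.ncard_union_le _ _).trans (Nat.add_le_add_left (ncard_biUnion_incidenceSet_le hΔ _) _)
    _ ≤ gcut G S + Δ * (s * (splitParts c S).ncard) :=
        Nat.add_le_add_left (Nat.mul_le_mul_left _
          (ncard_le_mul_ncard_of_subset_preimage hsize subset_rfl)) _

end Parts

section Bounds

variable [Finite V] [Finite P] {G : SimpleGraph V} {c : V → P} {s Δ : ℕ}

lemma le_two_mul_ncard_partsWithin (hsize : ∀ p, (c ⁻¹' {p}).ncard ≤ s) {n : ℕ} {X : Set V}
    (hX : n ≤ X.ncard) (hB : 2 * (s * (splitParts c X).ncard) ≤ n) :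
    n ≤ 2 * s * (partsWithin c X).ncard := by
  have hcover := ncard_le_mul_ncard_of_subset_preimage hsize
    (subset_preimage_partsWithin_union_splitParts c X)
  have hunion := Nat.mul_le_mul_left s (Set.ncard_union_le (partsWithin c X) (splitParts c X))
  linarith

lemma le_two_mul_min_ncard_partsWithin (hc : Function.Surjective c)
    (hconn : ∀ p, (G.induce (c ⁻¹' {p})).Connected) (hsize : ∀ p, (c ⁻¹' {p}).ncard ≤ s)
    {S : Set V} (hSle : S.ncard ≤ Sᶜ.ncard) (hsmall : 2 * s * gcut G S ≤ S.ncard) :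
    S.ncard ≤ 2 * s * min (partsWithin c S).ncard (partsWithin c S)ᶜ.ncard := by
  have hB : 2 * (s * (splitParts c S).ncard) ≤ S.ncard :=
    calc 2 * (s * (splitParts c S).ncard) = 2 * s * (splitParts c S).ncard := (mul_assoc ..).symm
      _ ≤ 2 * s * gcut G S := Nat.mul_le_mul_left _ (ncard_splitParts_le_gcut S hconn)
      _ ≤ S.ncard := hsmall
  have hT := le_two_mul_ncard_partsWithin hsize le_rfl hB
  have hTc := le_two_mul_ncard_partsWithin hsize hSle (by rwa [splitParts_compl])
  have hTc' := Nat.mul_le_mul_left (2 * s)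
    (Set.ncard_le_ncard (partsWithin_compl_subset_compl S hc) (Set.toFinite _))
  rw [mul_min_of_nonneg _ _ (Nat.zero_le _)]
  exact le_min hT (hTc.trans hTc')

lemma gcut_preimage_partsWithin_le_mul (hΔ : ∀ v, gdeg G v ≤ Δ)
    (hconn : ∀ p, (G.induce (c ⁻¹' {p})).Connected) (hsize : ∀ p, (c ⁻¹' {p}).ncard ≤ s)
    (hs : 0 < s) (S : Set V) :
    gcut G (c ⁻¹' partsWithin c S) ≤ 2 * s * Δ * gcut G S := by
  have hsplit := gcut_preimage_partsWithin_le S hΔ hsize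
  have hB := Nat.mul_le_mul_left (Δ * s) (ncard_splitParts_le_gcut S hconn)
  -- `δ(S) ≤ Δ |S|`, so `δ(S) = 0` unless `Δ ≥ 1`
  have hδ : gcut G S ≤ Δ * s * gcut G S := by
    rcases Nat.eq_zero_or_pos Δ with rfl | hΔpos
    · simpa using gcut_le_mul_ncard hΔ S
    · exact Nat.le_mul_of_pos_left _ (Nat.mul_pos hΔpos hs)
  linarith

end Bounds

lemma expansion_nonneg (G : SimpleGraph V) : 0 ≤ expansion G :=
  Real.sInf_nonneg (by rintro x ⟨S, -, -, rfl⟩; positivity)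

lemma exists_ncard_le_compl_expansion_eq [Finite V] [Nontrivial V] (G : SimpleGraph V) :
    ∃ S : Set V, S.Nonempty ∧ S.ncard ≤ Sᶜ.ncard ∧
      expansion G = gcut G S / S.ncard := by
  let ratio (S : Set V) : ℝ := gcut G S / ((min S.ncard Sᶜ.ncard : ℕ) : ℝ)
  obtain ⟨S, hS, hSu, hSeq⟩ :
      expansion G ∈ {x | ∃ S : Set V, S.Nonempty ∧ S ≠ Set.univ ∧ x = ratio S} := by
    obtain ⟨v⟩ := (inferInstance : Nonempty V)
    refine Set.Nonempty.csInf_mem ⟨_, {v}, Set.singleton_nonempty v, Set.singleton_ne_univ v, rfl⟩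
      ((Set.finite_range ratio).subset ?_)
    rintro x ⟨S, -, -, rfl⟩
    exact ⟨S, rfl⟩
  rcases le_total S.ncard Sᶜ.ncard with h | h
  · exact ⟨S, hS, h, by simp only [hSeq, ratio, min_eq_left h]⟩
  · exact ⟨Sᶜ, Set.nonempty_compl.mpr hSu, by rwa [compl_compl],
      by simp only [hSeq, ratio, min_eq_right h, gcut_compl]⟩

lemma contractedExpansion_of_subsingleton [Subsingleton P] (G : SimpleGraph V) (c : V → P) :
    contractedExpansion G c = 0 := by
  rw [contractedExpansion, ← Real.sInf_empty]
  congr 1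
  refine Set.eq_empty_of_forall_notMem ?_
  rintro x ⟨S, hS, hSu, -⟩
  exact hSu (hS.eq_univ)

lemma contractedExpansion_le (G : SimpleGraph V) (c : V → P) {T : Set P} (hT : T.Nonempty)
    (hTu : T ≠ Set.univ) :
    contractedExpansion G c ≤ gcut G (c ⁻¹' T) / ((min T.ncard Tᶜ.ncard : ℕ) : ℝ) :=
  csInf_le ⟨0, by rintro x ⟨S, -, -, rfl⟩; positivity⟩ ⟨T, hT, hTu, rfl⟩

lemma contractedExpansion_le_of_cut [Finite V] [Finite P] {G : SimpleGraph V} {c : V → P}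
    (hc : Function.Surjective c) {s Δ : ℕ} (hΔ : ∀ v, gdeg G v ≤ Δ)
    (hconn : ∀ p, (G.induce (c ⁻¹' {p})).Connected) (hsize : ∀ p, (c ⁻¹' {p}).ncard ≤ s)
    {S : Set V} (hS : S.Nonempty) (hSle : S.ncard ≤ Sᶜ.ncard)
    (hsmall : 2 * s * gcut G S ≤ S.ncard) :
    contractedExpansion G c ≤ 4 * (s : ℝ) ^ 2 * Δ * (gcut G S / S.ncard) := by
  set T := partsWithin c S
  have hn : 0 < S.ncard := hS.ncard_pos
  have hmin := le_two_mul_min_ncard_partsWithin hc hconn hsize hSle hsmall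
  have hpos : 0 < 2 * s * min T.ncard Tᶜ.ncard := hn.trans_le hmin
  have hs : 0 < s := Nat.pos_of_ne_zero (by rintro rfl; simp at hpos)
  have hm : 0 < min T.ncard Tᶜ.ncard := Nat.pos_of_ne_zero (by intro h; simp [h] at hpos)
  obtain ⟨hT, hTc⟩ := lt_min_iff.mp hm
  have hTu : T ≠ Set.univ := Set.nonempty_compl.mp (Set.nonempty_of_ncard_ne_zero hTc.ne')
  have hcut := gcut_preimage_partsWithin_le_mul hΔ hconn hsize hs S
  calc contractedExpansion G c ≤ gcut G (c ⁻¹' T) / ((min T.ncard Tᶜ.ncard : ℕ) : ℝ) :=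
        contractedExpansion_le G c (Set.nonempty_of_ncard_ne_zero hT.ne') hTu
    _ ≤ 4 * (s : ℝ) ^ 2 * Δ * (gcut G S / S.ncard) := by
        rw [mul_div_assoc', div_le_div_iff₀ (by exact_mod_cast hm) (by exact_mod_cast hn)]
        have key : gcut G (c ⁻¹' T) * S.ncard ≤ 4 * s ^ 2 * Δ * gcut G S * min T.ncard Tᶜ.ncard :=
          (Nat.mul_le_mul hcut hmin).trans_eq (by ring)
        exact_mod_cast key

/-- If each part of the partition (the fibers of `c`) induces a connected subgraph of
`G` and has at most `s` vertices, `G` has maximum degree `Δ`, and `h(G) ≤ 1/(2s)`,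
then the contracted multigraph `G_𝒫` satisfies `h(G_𝒫) ≤ 4 s² Δ · h(G)`. -/
theorem contracted_expansion_bound [Fintype V] [Fintype P]
    (G : SimpleGraph V) (c : V → P) (hc : Function.Surjective c)
    (s Δ : ℕ) (hΔ : ∀ v : V, gdeg G v ≤ Δ)
    (hconn : ∀ p : P, (G.induce (c ⁻¹' {p})).Connected)
    (hsize : ∀ p : P, (c ⁻¹' {p}).ncard ≤ s)
    (hsmall : expansion G ≤ 1 / (2 * (s : ℝ))) :
    contractedExpansion G c ≤ 4 * (s : ℝ) ^ 2 * (Δ : ℝ) * expansion G := by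
  rcases subsingleton_or_nontrivial P with hP | hP
  · rw [contractedExpansion_of_subsingleton]
    exact mul_nonneg (by positivity) (expansion_nonneg G)
  have : Nontrivial V := hc.nontrivial
  obtain ⟨S, hS, hSle, hSeq⟩ := exists_ncard_le_compl_expansion_eq G
  have hs : (0 : ℝ) < s := by
    obtain ⟨v, hv⟩ := hc (Classical.arbitrary P)
    exact_mod_cast ((Set.ncard_pos (Set.toFinite _)).mpr ⟨v, hv⟩).trans_le (hsize _)
  rw [hSeq] at hsmall ⊢
  refine contractedExpansion_le_of_cut hc hΔ hconn hsize hS hSle ?_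
  rw [div_le_div_iff₀ (by exact_mod_cast hS.ncard_pos) (by positivity)] at hsmall
  exact_mod_cast (by linarith : (2 * s * gcut G S : ℝ) ≤ S.ncard)
end

section
/- Let G_b = (V, E ∪ D) be a graph with φ(G_b) ≥ α_b, where D is a set of edges disjoint from E and G = (V, E). Then every cut S ⊆ V with vol_G(S) ≤ vol_G(V)/2 and conductance φ_G(S) < α_b/2 in G satisfies vol_G(S) ≤ 2|D|/α_b. -/
variable {V : Type*}

noncomputable def gvol (G : SimpleGraph V) (S : Set V) : ℕ := ∑ᶠ v ∈ S, gdeg G v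

lemma gdeg_mono [Fintype V] {G Gb : SimpleGraph V} (hle : G ≤ Gb) (v : V) :
    gdeg G v ≤ gdeg Gb v :=
  Set.ncard_le_ncard (fun _ hw => hle hw) (Set.toFinite _)

lemma gvol_eq_sum [Fintype V] (G : SimpleGraph V) (S : Set V) :
    gvol G S = ∑ v ∈ (Set.toFinite S).toFinset, gdeg G v :=
  by rw [gvol, ← finsum_mem_coe_finset, (Set.toFinite S).coe_toFinset]

lemma gvol_mono [Fintype V] {G Gb : SimpleGraph V} (hle : G ≤ Gb) (S : Set V) :
    gvol G S ≤ gvol Gb S := by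
  rw [gvol_eq_sum, gvol_eq_sum]
  exact Finset.sum_le_sum fun v _ => gdeg_mono hle v

lemma gvol_add_compl [Fintype V] (G : SimpleGraph V) (S : Set V) :
    gvol G S + gvol G Sᶜ = gvol G Set.univ := by
  classical
  rw [gvol_eq_sum, gvol_eq_sum, gvol_eq_sum]
  rw [← Finset.sum_union]
  · apply Finset.sum_congr _ (fun _ _ => rfl)
    ext v
    simp [Set.Finite.mem_toFinset]
    tauto
  · rw [Finset.disjoint_left]
    intro a ha hb
    rw [Set.Finite.mem_toFinset] at ha hb
    exact hb ha

lemma gcut_le [Fintype V] {G Gb : SimpleGraph V} (hle : G ≤ Gb) (S : Set V) :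
    gcut Gb S ≤ gcut G S + (Gb.edgeSet \ G.edgeSet).ncard := by
  refine le_trans (le_trans (Set.ncard_le_ncard ?_ (Set.toFinite _)) (Set.ncard_union_le _ _)) le_rfl
  intro e he
  obtain ⟨heb, hP⟩ := he
  by_cases hg : e ∈ G.edgeSet
  · exact Or.inl ⟨hg, hP⟩
  · exact Or.inr ⟨heb, hg⟩

/-- Let `G_b = (V, E ∪ D)` with `φ(G_b) ≥ α_b`, where `G = (V, E)` and
`D = E(G_b) \ E(G)`.  Then every cut `S` with `vol_G(S) ≤ vol_G(V)/2` and
`φ_G(S) < α_b/2` satisfies `vol_G(S) ≤ 2|D|/α_b`. -/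
theorem sparse_cut_small_volume [Fintype V] (G Gb : SimpleGraph V) (hle : G ≤ Gb)
    (αb : ℝ) (hαb : 0 < αb)
    (hexp : ∀ S : Set V,
      αb * ((min (gvol Gb S) (gvol Gb Sᶜ) : ℕ) : ℝ) ≤ (gcut Gb S : ℝ)) :
    ∀ S : Set V, (gvol G S : ℝ) ≤ (gvol G Set.univ : ℝ) / 2 →
      (gcut G S : ℝ) < (αb / 2) * (gvol G S : ℝ) →
      (gvol G S : ℝ) ≤ 2 * ((Gb.edgeSet \ G.edgeSet).ncard : ℝ) / αb := by
  intro S hvol hcut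
  have hsum : (gvol G S : ℝ) + (gvol G Sᶜ : ℝ) = (gvol G Set.univ : ℝ) := by
    exact_mod_cast congrArg (Nat.cast : ℕ → ℝ) (gvol_add_compl G S)
  have h1 : (gvol G S : ℕ) ≤ gvol Gb S := gvol_mono hle S
  have h2c : (gvol G Sᶜ : ℕ) ≤ gvol Gb Sᶜ := gvol_mono hle Sᶜ
  have h2 : (gvol G S : ℝ) ≤ (gvol Gb Sᶜ : ℝ) := by
    have : (gvol G S : ℝ) ≤ (gvol G Sᶜ : ℝ) := by linarith
    exact this.trans (by exact_mod_cast h2c)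
  have hmin : (gvol G S : ℝ) ≤ ((min (gvol Gb S) (gvol Gb Sᶜ) : ℕ) : ℝ) := by
    rcases min_cases (gvol Gb S) (gvol Gb Sᶜ) with ⟨h, _⟩ | ⟨h, _⟩ <;> rw [h]
    · exact_mod_cast h1
    · exact h2
  have hcb : (gcut Gb S : ℝ) ≤ (gcut G S : ℝ) + ((Gb.edgeSet \ G.edgeSet).ncard : ℝ) := by
    exact_mod_cast gcut_le hle S
  have hchain := (hexp S).trans hcb
  have hmul : αb * (gvol G S : ℝ) ≤ αb * ((min (gvol Gb S) (gvol Gb Sᶜ) : ℕ) : ℝ) :=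
    mul_le_mul_of_nonneg_left hmin hαb.le
  rw [le_div_iff₀ hαb]
  nlinarith
end

section
/- Let P₁, …, P_t be disjoint vertex sets in a graph G = (V,E), and let H_i = G[V − (P₁ ∪ … ∪ P_{i−1})]. Suppose φ_{H_i}(P_i) < c for every i ≤ t', where φ_{H_i}(P_i) = δ_{H_i}(P_i)/vol_{H_i}(P_i). If vol_G(P₁ ∪ … ∪ P_{t'}) ≤ vol(G)/2, then φ_G(P₁ ∪ … ∪ P_{t'}) < c. -/
variable {V : Type*}

/-- degree of `v` inside the induced subgraph `G[W]` -/
noncomputable def gdegIn (G : SimpleGraph V) (W : Set V) (v : V) : ℕ :=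
  (G.neighborSet v ∩ W).ncard

/-- volume of `S` inside the induced subgraph `G[W]` -/
noncomputable def gvolIn (G : SimpleGraph V) (W S : Set V) : ℕ :=
  ∑ᶠ v ∈ S, gdegIn G W v

/-- number of edges of the induced subgraph `G[W]` crossing the cut `S` -/
noncomputable def gcutIn (G : SimpleGraph V) (W S : Set V) : ℕ :=
  {e ∈ G.edgeSet | ∃ u v : V, e = s(u, v) ∧ u ∈ S ∧ u ∈ W ∧ v ∈ W ∧ v ∉ S}.ncard

lemma ncard_iUnion_le {α ι : Type*} [Finite α] [Fintype ι] (A : ι → Set α) :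
    (⋃ i, A i).ncard ≤ ∑ i, (A i).ncard := by
  classical
  have := Fintype.ofFinite α
  have h : (⋃ i, A i) = ((Finset.univ.biUnion fun i => (A i).toFinset : Finset α) : Set α) := by
    ext x; simp
  rw [h, Set.ncard_coe_finset]
  calc (Finset.univ.biUnion fun i => (A i).toFinset).card
      ≤ ∑ i, (A i).toFinset.card := Finset.card_biUnion_le
    _ = ∑ i, (A i).ncard := by simp [Set.ncard_eq_toFinset_card']

/-- For pairwise disjoint vertex sets `P 1, …, P t'` and `H i = G[V − (P 1 ∪ … ∪ P (i−1))]`,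
if `φ_{H i}(P i) < c` for every `i` (i.e. `δ_{H i}(P i) < c · vol_{H i}(P i)`), and
`vol_G(P 1 ∪ … ∪ P t') ≤ vol(G)/2`, then `φ_G(P 1 ∪ … ∪ P t') < c`. -/
theorem conductance_union_lt [Fintype V] (G : SimpleGraph V) (t' : ℕ) (ht' : 0 < t')
    (P : Fin t' → Set V) (hdisj : Pairwise (Function.onFun Disjoint P)) (c : ℝ)
    (hsparse : ∀ i : Fin t',
      (gcutIn G (⋃ j < i, P j)ᶜ (P i) : ℝ) <
        c * (gvolIn G (⋃ j < i, P j)ᶜ (P i) : ℝ))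
    (hhalf : (gvolIn G Set.univ (⋃ i, P i) : ℝ) ≤
      (gvolIn G Set.univ Set.univ : ℝ) / 2) :
    (gcutIn G Set.univ (⋃ i, P i) : ℝ) < c * (gvolIn G Set.univ (⋃ i, P i) : ℝ) := by
  classical
  set W : Fin t' → Set V := fun i => (⋃ j < i, P j)ᶜ with hW
  have hsubset : {e ∈ G.edgeSet | ∃ u v : V, e = s(u, v) ∧ u ∈ (⋃ i, P i) ∧ u ∈ (Set.univ : Set V) ∧ v ∈ (Set.univ : Set V) ∧ v ∉ (⋃ i, P i)}
      ⊆ ⋃ i, {e ∈ G.edgeSet | ∃ u v : V, e = s(u, v) ∧ u ∈ P i ∧ u ∈ W i ∧ v ∈ W i ∧ v ∉ P i} := by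
    rintro e ⟨he, u, v, rfl, hu, -, -, hv⟩
    obtain ⟨i, hui⟩ := Set.mem_iUnion.1 hu
    refine Set.mem_iUnion.2 ⟨i, he, u, v, rfl, hui, ?_, ?_, ?_⟩
    · intro h
      simp only [Set.mem_iUnion] at h
      obtain ⟨j, hj, huj⟩ := h
      exact (hdisj (ne_of_lt hj)).le_bot ⟨huj, hui⟩
    · intro h
      simp only [Set.mem_iUnion] at h
      obtain ⟨j, _, hvj⟩ := h
      exact hv (Set.mem_iUnion.2 ⟨j, hvj⟩)
    · exact fun h => hv (Set.mem_iUnion.2 ⟨i, h⟩)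
  have hcut : (gcutIn G Set.univ (⋃ i, P i) : ℕ) ≤ ∑ i, gcutIn G (W i) (P i) := by
    unfold gcutIn
    calc _ ≤ (⋃ i, {e ∈ G.edgeSet | ∃ u v : V, e = s(u, v) ∧ u ∈ P i ∧ u ∈ W i ∧ v ∈ W i ∧ v ∉ P i}).ncard :=
            Set.ncard_le_ncard hsubset (Set.toFinite _)
      _ ≤ _ := ncard_iUnion_le _
  have hvol_split : gvolIn G Set.univ (⋃ i, P i) = ∑ i, gvolIn G Set.univ (P i) := by
    unfold gvolIn
    rw [finsum_mem_iUnion hdisj (fun i => Set.toFinite _), finsum_eq_sum_of_fintype]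
  have hvol_mono : ∀ i, gvolIn G (W i) (P i) ≤ gvolIn G Set.univ (P i) := by
    intro i
    unfold gvolIn
    rw [finsum_mem_eq_finite_toFinset_sum _ (Set.toFinite (P i)),
      finsum_mem_eq_finite_toFinset_sum _ (Set.toFinite (P i))]
    refine Finset.sum_le_sum fun v _ => ?_
    exact Set.ncard_le_ncard (Set.inter_subset_inter_right _ (Set.subset_univ _)) (Set.toFinite _)
  -- c > 0
  have hc : 0 < c := by
    have i : Fin t' := ⟨0, ht'⟩
    have h := hsparse i
    have h0 : (0:ℝ) ≤ (gcutIn G (W i) (P i) : ℝ) := Nat.cast_nonneg _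
    have hpos : 0 < c * (gvolIn G (W i) (P i) : ℝ) := lt_of_le_of_lt h0 h
    by_contra hle
    push_neg at hle
    have : c * (gvolIn G (W i) (P i) : ℝ) ≤ 0 :=
      mul_nonpos_of_nonpos_of_nonneg hle (Nat.cast_nonneg _)
    linarith
  -- final chain
  have key : (gcutIn G Set.univ (⋃ i, P i) : ℝ) < c * ∑ i, (gvolIn G (W i) (P i) : ℝ) := by
    calc (gcutIn G Set.univ (⋃ i, P i) : ℝ) ≤ ∑ i, (gcutIn G (W i) (P i) : ℝ) := by
          exact_mod_cast hcut
      _ < ∑ i, c * (gvolIn G (W i) (P i) : ℝ) :=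
          Finset.sum_lt_sum_of_nonempty (Finset.univ_nonempty_iff.2 ⟨⟨0, ht'⟩⟩)
            (fun i _ => hsparse i)
      _ = c * ∑ i, (gvolIn G (W i) (P i) : ℝ) := by rw [Finset.mul_sum]
  have hvle : ∑ i, (gvolIn G (W i) (P i) : ℝ) ≤ (gvolIn G Set.univ (⋃ i, P i) : ℝ) := by
    rw [hvol_split]
    push_cast
    exact Finset.sum_le_sum fun i _ => by exact_mod_cast hvol_mono i
  calc (gcutIn G Set.univ (⋃ i, P i) : ℝ) < c * ∑ i, (gvolIn G (W i) (P i) : ℝ) := key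
    _ ≤ c * (gvolIn G Set.univ (⋃ i, P i) : ℝ) := by
        exact mul_le_mul_of_nonneg_left hvle hc.le
end

section
/- Let G = (V,E), let A ⊂ V, and let f be a preflow routing supply with source function Δ(v) = ⌈1/σ⌉·deg(v) for v ∈ A and Δ(v) = 0 otherwise, sink function T(v) = deg(v) for v ∉ A and 0 for v ∈ A, and congestion cong(f). Then for any (A,σ)-overlapping cut S′ (i.e. vol(S′ ∩ A)/vol(S′) ≥ σ) with vol(S′) > 2·|ex_f|/σ, the conductance satisfies φ(S′) ≥ σ/(2·cong(f)), assuming vol(S′) ≤ vol(V − S′). -/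
variable {V : Type*}

/-! Summing `Δ v + (inflow of v) - T v ≤ ex v` over `S'`, the flow between vertices of `S'`
cancels by antisymmetry, so the supply leaving `S'` is at least `Δ(S') - T(S') - ex(S')`.
On an `(A,σ)`-overlapping cut, `⌈1/σ⌉ vol(S' ∩ A) ≥ vol(S')` gives
`Δ(S') - T(S') ≥ vol(S' ∩ A) ≥ σ vol(S')`, while `ex(S') < σ vol(S') / 2`; and the supply
leaving `S'` is at most `cong(f) · δ(S')`. -/

theorem Finset.sum_sum_eq_zero_of_antisymm {M : Type*} [AddCommGroup M] [IsAddTorsionFree M]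
    (s : Finset V) {f : V → V → M} (hanti : ∀ u v, f u v = -f v u) :
    ∑ v ∈ s, ∑ u ∈ s, f u v = 0 := by
  refine self_eq_neg.mp ?_
  calc ∑ v ∈ s, ∑ u ∈ s, f u v = ∑ v ∈ s, ∑ u ∈ s, f v u := Finset.sum_comm
    _ = -∑ v ∈ s, ∑ u ∈ s, f u v := by
      simp only [← Finset.sum_neg_distrib, ← hanti]

theorem gvol_inter_add_gvol_inter_compl (G : SimpleGraph V) {S : Set V} (hS : S.Finite)
    (A : Set V) : gvol G (S ∩ A) + gvol G (S ∩ Aᶜ) = gvol G S :=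
  finsum_mem_inter_add_sdiff A hS

theorem sum_eq_mul_gvol_inter (G : SimpleGraph V) {A : Set V} [DecidablePred (· ∈ A)]
    {g : V → ℤ} {c : ℤ} (hA : ∀ v ∈ A, g v = c * gdeg G v) (hA' : ∀ v ∉ A, g v = 0)
    (s : Finset V) : ∑ v ∈ s, g v = c * gvol G (↑s ∩ A) := by
  have hinter : (s : Set V) ∩ A = ↑(s.filter (· ∈ A)) := by
    rw [Finset.coe_filter]; rfl
  rw [hinter, gvol, finsum_mem_coe_finset, Nat.cast_sum, Finset.mul_sum,
    ← Finset.sum_filter_of_ne fun v _ hv => by_contra fun hvA => hv (hA' v hvA)]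
  exact Finset.sum_congr rfl fun v hv => hA v (Finset.mem_filter.mp hv).2

theorem div_two_mul_le_div {σ C c x : ℝ} (hσ : 0 < σ) (hx : 0 < x) (hc : 0 ≤ c)
    (h : σ * x / 2 ≤ C * c) : σ / (2 * C) ≤ c / x := by
  have hC : 0 < C := pos_of_mul_pos_left ((by positivity : 0 < σ * x / 2).trans_le h) hc
  rw [div_le_div_iff₀ (by positivity) hx]
  linarith

section Preflow

open Finset

variable [Fintype V] [DecidableEq V]

def outflow (f : V → V → ℤ) (s : Finset V) : ℤ := ∑ u ∈ s, ∑ v ∈ sᶜ, f u v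

theorem sum_inflow_eq_neg_outflow {f : V → V → ℤ} (hanti : ∀ u v, f u v = -f v u)
    (s : Finset V) : ∑ v ∈ s, ∑ u, f u v = -outflow f s := by
  have hcross : ∑ v ∈ s, ∑ u ∈ sᶜ, f u v = -outflow f s := by
    simp only [outflow, sum_comm (s := s), ← sum_neg_distrib, ← hanti]
  simp only [← sum_add_sum_compl s, sum_add_distrib,
    s.sum_sum_eq_zero_of_antisymm hanti, hcross, zero_add]

theorem sum_sub_sum_sub_sum_le_outflow {f : V → V → ℤ} (hanti : ∀ u v, f u v = -f v u)
    {Δ T ex : V → ℤ} (hex : ∀ v, Δ v + ∑ u, f u v - T v ≤ ex v) (s : Finset V) :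
    ∑ v ∈ s, Δ v - ∑ v ∈ s, T v - ∑ v ∈ s, ex v ≤ outflow f s := by
  have hsum := sum_le_sum fun v (_ : v ∈ s) => hex v
  rw [sum_sub_distrib, sum_add_distrib, sum_inflow_eq_neg_outflow hanti] at hsum
  linarith

theorem gcut_coe_eq_card (G : SimpleGraph V) [DecidableRel G.Adj] (s : Finset V) :
    gcut G s = #{p ∈ s ×ˢ sᶜ | G.Adj p.1 p.2} := by
  have himage : {e ∈ G.edgeSet | ∃ u ∈ (s : Set V), ∃ v ∈ (s : Set V)ᶜ, e = s(u, v)} =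
      ↑(image (fun p => s(p.1, p.2)) {p ∈ s ×ˢ sᶜ | G.Adj p.1 p.2}) := by
    ext e
    simp only [Set.mem_ofPred_eq, coe_image, Set.mem_image, mem_coe, mem_filter, mem_product,
      mem_compl, Set.mem_compl_iff, Prod.exists]
    constructor
    · rintro ⟨he, u, hu, v, hv, rfl⟩
      exact ⟨u, v, ⟨⟨hu, hv⟩, he⟩, rfl⟩
    · rintro ⟨u, v, ⟨⟨hu, hv⟩, hadj⟩, rfl⟩
      exact ⟨hadj, u, hu, v, hv, rfl⟩
  rw [gcut, himage, Set.ncard_coe_finset]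
  refine card_image_of_injOn fun p hp q hq hpq => ?_
  simp only [coe_filter, mem_product, mem_compl, Set.mem_ofPred_eq] at hp hq
  rcases Sym2.eq_iff.mp hpq with ⟨h1, h2⟩ | ⟨h1, -⟩
  · exact Prod.ext h1 h2
  · exact absurd (h1 ▸ hp.1.1) hq.1.2

theorem outflow_le_mul_gcut (G : SimpleGraph V) {f : V → V → ℤ}
    (hsupp : ∀ u v, ¬ G.Adj u v → f u v = 0) {C : ℝ} (hC : ∀ u v, (f u v : ℝ) ≤ C)
    (s : Finset V) : (outflow f s : ℝ) ≤ C * gcut G s := by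
  classical
  have hF : outflow f s = ∑ p ∈ s ×ˢ sᶜ with G.Adj p.1 p.2, f p.1 p.2 := by
    rw [outflow, ← sum_product', sum_filter_of_ne]
    exact fun p _ hp => by_contra fun hadj => hp (hsupp _ _ hadj)
  rw [gcut_coe_eq_card, hF, Int.cast_sum, mul_comm, ← nsmul_eq_mul]
  exact sum_le_card_nsmul _ _ _ fun p _ => hC p.1 p.2

end Preflow

theorem overlapping_cut_conductance_general [Fintype V] (G : SimpleGraph V)
    (A : Set V) (σ : ℝ) (hσ0 : 0 < σ)
    (f : V → V → ℤ)
    (hanti : ∀ u v : V, f u v = - f v u)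
    (hsupp : ∀ u v : V, ¬ G.Adj u v → f u v = 0)
    (C : ℝ) (hC : ∀ u v : V, (f u v : ℝ) ≤ C)
    (Δ T : V → ℤ)
    (hΔA : ∀ v ∈ A, Δ v = ⌈1 / σ⌉ * (gdeg G v : ℤ))
    (hΔA' : ∀ v ∉ A, Δ v = 0)
    (hTA : ∀ v ∈ A, T v = 0)
    (hTA' : ∀ v ∉ A, T v = (gdeg G v : ℤ))
    (ex : V → ℤ)
    (hex : ∀ v : V, ex v = max ((Δ v + ∑ u : V, f u v) - T v) 0)
    (S' : Set V)
    (hoverlap : σ * (gvol G S' : ℝ) ≤ (gvol G (S' ∩ A) : ℝ))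
    (hbig : 2 * (∑ v : V, (ex v : ℝ)) / σ < (gvol G S' : ℝ)) :
    σ / (2 * C) ≤ (gcut G S' : ℝ) / (gvol G S' : ℝ) := by
  classical
  obtain ⟨s, rfl⟩ : ∃ s : Finset V, (s : Set V) = S' := ⟨S'.toFinset, S'.coe_toFinset⟩
  have hex0 : ∀ v, 0 ≤ ex v := fun v => (hex v).symm ▸ le_max_right _ _
  have hsupply : ∑ v ∈ s, Δ v = ⌈1 / σ⌉ * gvol G (↑s ∩ A) :=
    sum_eq_mul_gvol_inter G hΔA hΔA' s
  have hsink : ∑ v ∈ s, T v = gvol G (↑s ∩ Aᶜ) := by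
    simpa using sum_eq_mul_gvol_inter G (A := Aᶜ) (c := 1) (by simpa using hTA')
      (fun v hv => hTA v (not_not.mp hv)) s
  have hout := sum_sub_sum_sub_sum_le_outflow hanti (fun v => (hex v).symm ▸ le_max_left _ _) s
  rw [hsupply, hsink] at hout
  have hexcess : ∑ v ∈ s, ex v ≤ ∑ v, ex v := Finset.sum_le_univ_sum_of_nonneg hex0
  have hvol : (gvol G (↑s ∩ A) : ℝ) + gvol G (↑s ∩ Aᶜ) = gvol G s := by
    exact_mod_cast gvol_inter_add_gvol_inter_compl G s.finite_toSet A
  have hvolS : 0 < (gvol G s : ℝ) :=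
    hbig.trans_le' <| div_nonneg (mul_nonneg zero_le_two <|
      Finset.sum_nonneg fun v _ => Int.cast_nonneg_iff.mpr (hex0 v)) hσ0.le
  have hceil : (gvol G s : ℝ) ≤ ⌈1 / σ⌉ * gvol G (↑s ∩ A) := calc
    (gvol G s : ℝ) = 1 / σ * (σ * gvol G s) := by field_simp
    _ ≤ 1 / σ * gvol G (↑s ∩ A) := by gcongr
    _ ≤ ⌈1 / σ⌉ * gvol G (↑s ∩ A) := by gcongr; exact Int.le_ceil _
  rw [div_lt_iff₀ hσ0] at hbig
  refine div_two_mul_le_div hσ0 hvolS (Nat.cast_nonneg _) ?_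
  calc σ * gvol G s / 2 ≤ gvol G (↑s ∩ A) - ∑ v, (ex v : ℝ) := by linarith
    _ ≤ ⌈1 / σ⌉ * gvol G (↑s ∩ A) - gvol G (↑s ∩ Aᶜ) - ∑ v, (ex v : ℝ) := by
      linarith
    _ ≤ outflow f s := by exact_mod_cast hout.trans' (sub_le_sub_left hexcess _)
    _ ≤ C * gcut G s := outflow_le_mul_gcut G hsupp hC s

/-- Let `f` be a preflow (antisymmetric, supported on edges, with congestion at most
`C`) for the instance with source function `Δ(v) = ⌈1/σ⌉·deg(v)` on `A` (and `0`
elsewhere) and sink function `T(v) = deg(v)` off `A` (and `0` on `A`).  Then every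
`(A,σ)`-overlapping cut `S'` (i.e. `vol(S' ∩ A) ≥ σ·vol(S')`) with
`vol(S') > 2·|ex_f|/σ` and `vol(S') ≤ vol(V − S')` satisfies
`φ(S') = δ(S')/vol(S') ≥ σ/(2·cong(f))`. -/
theorem overlapping_cut_conductance [Fintype V] (G : SimpleGraph V)
    (A : Set V) (σ : ℝ) (hσ0 : 0 < σ) (hσ1 : σ ≤ 1)
    (f : V → V → ℤ)
    (hanti : ∀ u v : V, f u v = - f v u)
    (hsupp : ∀ u v : V, ¬ G.Adj u v → f u v = 0)
    (C : ℝ) (hC : ∀ u v : V, (f u v : ℝ) ≤ C)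
    (Δ T : V → ℤ)
    (hΔA : ∀ v ∈ A, Δ v = ⌈1 / σ⌉ * (gdeg G v : ℤ))
    (hΔA' : ∀ v ∉ A, Δ v = 0)
    (hTA : ∀ v ∈ A, T v = 0)
    (hTA' : ∀ v ∉ A, T v = (gdeg G v : ℤ))
    (ex : V → ℤ)
    (hex : ∀ v : V, ex v = max ((Δ v + ∑ u : V, f u v) - T v) 0)
    (S' : Set V)
    (hside : gvol G S' ≤ gvol G S'ᶜ)
    (hoverlap : σ * (gvol G S' : ℝ) ≤ (gvol G (S' ∩ A) : ℝ))
    (hbig : 2 * (∑ v : V, (ex v : ℝ)) / σ < (gvol G S' : ℝ)) :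
    σ / (2 * C) ≤ (gcut G S' : ℝ) / (gvol G S' : ℝ) :=
  overlapping_cut_conductance_general G A σ hσ0 f hanti hsupp C hC Δ T hΔA hΔA' hTA hTA' ex hex S'
    hoverlap hbig
end

section
/- Let G = (V,E) be a graph with distinct edge weights, F ⊆ E a forest, S ⊇ end(E − F) a set of terminals containing all endpoints of non-forest edges, and let (G′, F′) = Contract_S(G, F) be the contracted graph and forest. Then E(G′) = (E − F) ⊔ E(F′) and |E(G′)| ≤ |E − F| + 2|S|. -/
/-!
Root every tree of `F`. Along a path of a forest the distance to the root cannot go down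
again once it has gone up, so the endpoint of a connecting path farther from the root leaves
the path along its edge toward the root. Different paths are edge-disjoint, so this endpoint
determines the path, and there are at most as many paths as endpoints.
Now count incidences between paths and endpoints: a path has two endpoints, and an endpoint
that is not a terminal lies on at least three paths. With `a` terminal and `b` non-terminal
endpoints this gives `a + 3b ≤ 2|Ps| ≤ 2(a + b)`, hence `b ≤ a` and `|Ps| ≤ a + b ≤ 2a ≤ 2|S|`.
-/

variable {V : Type*}

/-- `P` is the edge set of a nontrivial path of `F`. -/
def IsPathEdges (F : SimpleGraph V) (P : Set (Sym2 V)) : Prop :=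
  ∃ (u v : V) (p : F.Walk u v), p.IsPath ∧ p.edges ≠ [] ∧ P = {e | e ∈ p.edges}

/-- `u` is an endpoint of the path of `F` whose edge set is `P`. -/
def IsEndpoint (F : SimpleGraph V) (P : Set (Sym2 V)) (u : V) : Prop :=
  ∃ (v : V) (p : F.Walk u v), p.IsPath ∧ p.edges ≠ [] ∧ P = {e | e ∈ p.edges}

/-- The subgraph of `F` formed by the union of an edge set `E`. -/
def pathUnion (F : SimpleGraph V) (E : Set (Sym2 V)) : F.Subgraph where
  verts := {v : V | ∃ u : V, F.Adj v u ∧ s(v, u) ∈ E}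
  Adj u v := F.Adj u v ∧ s(u, v) ∈ E
  adj_sub h := h.1
  edge_vert h := ⟨_, h.1, h.2⟩
  symm := ⟨fun u v h => ⟨h.1.symm, by rw [Sym2.eq_swap]; exact h.2⟩⟩

/-- `Ps` is the set of connecting paths of the forest `F` with respect to the
terminal set `S` (the disjoint union, over the trees of `F`, of the connecting
paths of each tree): paths are pairwise edge-disjoint, within each tree the union
of the paths is connected, every terminal is an endpoint of a path, and every
endpoint of a path is a terminal or an endpoint of two other paths. -/
def IsConnectingPathsForest (F : SimpleGraph V) (S : Set V)
    (Ps : Set (Set (Sym2 V))) : Prop :=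
  (∀ P ∈ Ps, IsPathEdges F P) ∧
  (Ps.Pairwise Disjoint) ∧
  (∀ P ∈ Ps, ∀ Q ∈ Ps, ∀ u v : V, IsEndpoint F P u → IsEndpoint F Q v →
    F.Reachable u v → (pathUnion F (⋃₀ Ps)).spanningCoe.Reachable u v) ∧
  (∀ u ∈ S, ∃ P ∈ Ps, IsEndpoint F P u) ∧
  (∀ P ∈ Ps, ∀ u : V, IsEndpoint F P u → u ∈ S ∨
    ∃ Q ∈ Ps, ∃ R ∈ Ps, Q ≠ P ∧ R ≠ P ∧ Q ≠ R ∧ IsEndpoint F Q u ∧ IsEndpoint F R u)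

open Finset

theorem Finset.card_le_two_mul_card_filter_of_incidence {α β : Type*} (r : α → β → Prop)
    [∀ a b, Decidable (r a b)] {s : Finset α} {t : Finset β} (p : β → Prop) [DecidablePred p]
    (hs : ∀ a ∈ s, #(t.bipartiteAbove r a) ≤ 2)
    (ht : ∀ b ∈ t, 1 ≤ #(s.bipartiteBelow r b))
    (ht' : ∀ b ∈ t, ¬ p b → 3 ≤ #(s.bipartiteBelow r b))
    (hst : #s ≤ #t) : #s ≤ 2 * #(t.filter p) := by
  have hsplit := card_filter_add_card_filter_not (s := t) p
  have hcount : #(t.filter p) • 1 + #(t.filter (¬ p ·)) • 3 ≤ #s • 2 :=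
    calc _ ≤ ∑ b ∈ t.filter p, #(s.bipartiteBelow r b)
          + ∑ b ∈ t.filter (¬ p ·), #(s.bipartiteBelow r b) :=
          add_le_add (card_nsmul_le_sum _ _ _ fun b hb ↦ ht b (mem_filter.1 hb).1)
            (card_nsmul_le_sum _ _ _ fun b hb ↦ ht' b (mem_filter.1 hb).1 (mem_filter.1 hb).2)
      _ = ∑ a ∈ s, #(t.bipartiteAbove r a) := by
          rw [sum_filter_add_sum_filter_not, sum_card_bipartiteAbove_eq_sum_card_bipartiteBelow]
      _ ≤ #s • 2 := sum_le_card_nsmul _ _ _ hs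
  simp only [smul_eq_mul] at hcount
  omega

namespace SimpleGraph

lemma Walk.IsPath.eq_or_eq_of_forall_mem_edges_iff {G : SimpleGraph V} {u v w x : V}
    {p : G.Walk u v} {q : G.Walk w x} (hp : p.IsPath) (hq : q.IsPath) (hqn : ¬ q.Nil)
    (h : ∀ e, e ∈ q.edges ↔ e ∈ p.edges) : w = u ∨ w = v := by
  obtain ⟨i, rfl, hi⟩ := p.mem_support_iff_exists_getVert.1 <|
    p.fst_mem_support_of_mem_edges <| (h _).1 (q.mk_start_snd_mem_edges hqn)
  by_contra! hne
  have hi₀ : i ≠ 0 := by rintro rfl; exact hne.1 p.getVert_zero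
  have hil : i < p.length := hi.lt_of_ne (by rintro rfl; exact hne.2 p.getVert_length)
  have hnbr : q.toSubgraph.neighborSet (p.getVert i) = p.toSubgraph.neighborSet (p.getVert i) := by
    ext y
    simp only [Subgraph.mem_neighborSet, Walk.adj_toSubgraph_iff_mem_edges, h]
  have htwo := hp.ncard_neighborSet_toSubgraph_internal_eq_two hi₀ hil
  rw [← hnbr, hq.neighborSet_toSubgraph_startpoint hqn, Set.ncard_singleton] at htwo
  exact absurd htwo (by norm_num)

lemma IsAcyclic.eq_of_adj_of_dist_add_one {G : SimpleGraph V} (hG : G.IsAcyclic) {r x a b : V}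
    (hr : G.Reachable r x) (ha : G.Adj x a) (hb : G.Adj x b)
    (hda : G.dist r a + 1 = G.dist r x) (hdb : G.dist r b + 1 = G.dist r x) : a = b := by
  classical
  obtain ⟨q, hq⟩ := hr.exists_isPath
  -- a shortest path to `c` avoids `x`, so `c` lies on the path `q` to `x`, just before `x`
  have key : ∀ c, G.Adj x c → G.dist r c + 1 = G.dist r x → c = q.penultimate := by
    intro c hc hdc
    obtain ⟨p, hp, hpl⟩ := (hr.trans hc.reachable).exists_path_of_dist
    have hx : x ∉ p.support := fun hx ↦ by
      have := (G.dist_le (p.takeUntil x hx)).trans (p.length_takeUntil_le_length hx)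
      omega
    exact hG.eq_penultimate_of_adj_end hq hc
      (hG.mem_support_of_ne_mem_support_of_adj_of_isPath hq hp hc hx)
  rw [key a ha hda, key b hb hdb]

lemma IsAcyclic.dist_lt_of_isPath_of_dist_snd {G : SimpleGraph V} (hG : G.IsAcyclic) {r u v : V}
    {p : G.Walk u v} (hp : p.IsPath) (hn : ¬ p.Nil) (hr : G.Reachable r u)
    (hd : G.dist r p.snd = G.dist r u + 1) : G.dist r u < G.dist r v := by
  induction p with
  | nil => simp at hn
  | @cons u u' v h q ih =>
    simp only [Walk.snd_cons] at hd
    cases q with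
    | nil => omega
    | @cons _ x _ h' q' =>
      have hru' : G.Reachable r u' := hr.trans h.reachable
      rcases hG.dist_eq_dist_add_one_of_adj_of_reachable r h' hru' with hx | hx
      · have hux : u = x := hG.eq_of_adj_of_dist_add_one hru' h.symm h' (by omega) (by omega)
        exact absurd (by simp [hux]) ((Walk.cons_isPath_iff _ _).1 hp).2
      · have := ih hp.of_cons (by simp) hru' (by simpa using hx)
        omega

lemma IsAcyclic.dist_snd_add_one {G : SimpleGraph V} (hG : G.IsAcyclic) {r u v : V}
    {p : G.Walk u v} (hp : p.IsPath) (hn : ¬ p.Nil) (hr : G.Reachable r u)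
    (hd : G.dist r v ≤ G.dist r u) : G.dist r p.snd + 1 = G.dist r u := by
  rcases hG.dist_eq_dist_add_one_of_adj_of_reachable r (p.adj_snd hn) hr with h | h
  · exact h.symm
  · exact absurd (hG.dist_lt_of_isPath_of_dist_snd hp hn hr h) hd.not_gt

noncomputable def componentRoot (G : SimpleGraph V) (v : V) : V :=
  Quot.out (G.connectedComponentMk v)

lemma reachable_componentRoot (G : SimpleGraph V) (v : V) : G.Reachable (G.componentRoot v) v :=
  ConnectedComponent.exact (Quot.out_eq _)

lemma Reachable.componentRoot_eq {G : SimpleGraph V} {u v : V} (h : G.Reachable u v) :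
    G.componentRoot u = G.componentRoot v := by
  rw [componentRoot, ConnectedComponent.sound h, componentRoot]

end SimpleGraph

open SimpleGraph

variable {F : SimpleGraph V}

lemma IsPathEdges.exists_setOf_isEndpoint_subset {P : Set (Sym2 V)} (hP : IsPathEdges F P) :
    ∃ u v, {w | IsEndpoint F P w} ⊆ {u, v} := by
  obtain ⟨u, v, p, hp, -, rfl⟩ := hP
  exact ⟨u, v, fun w ⟨_, q, hq, hqe, hpq⟩ ↦ hp.eq_or_eq_of_forall_mem_edges_iff hq
    (Walk.edges_eq_nil.not.1 hqe) fun e ↦ (Set.ext_iff.1 hpq e).symm⟩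

lemma IsPathEdges.exists_isEndpoint_adj_toward_componentRoot (hF : F.IsAcyclic)
    {P : Set (Sym2 V)} (hP : IsPathEdges F P) :
    ∃ w y, IsEndpoint F P w ∧ F.Adj w y ∧ s(w, y) ∈ P ∧
      F.dist (F.componentRoot w) y + 1 = F.dist (F.componentRoot w) w := by
  obtain ⟨u, v, p, hp, hpe, rfl⟩ := hP
  wlog hd : F.dist (F.componentRoot u) v ≤ F.dist (F.componentRoot u) u generalizing u v
  · have hroot := p.reachable.componentRoot_eq
    have := this v u p.reverse hp.reverse (by simpa using hpe) (by rw [← hroot]; omega)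
    simpa only [Walk.edges_reverse, List.mem_reverse] using this
  have hn : ¬ p.Nil := Walk.edges_eq_nil.not.1 hpe
  exact ⟨u, p.snd, ⟨v, p, hp, hpe, rfl⟩, p.adj_snd hn, p.mk_start_snd_mem_edges hn,
    hF.dist_snd_add_one hp hn (F.reachable_componentRoot u) hd⟩

lemma SimpleGraph.IsAcyclic.card_le_card_of_isEndpoint_mem (hF : F.IsAcyclic)
    {s : Finset (Set (Sym2 V))} {t : Finset V} (hpath : ∀ P ∈ s, IsPathEdges F P)
    (hdisj : (s : Set (Set (Sym2 V))).Pairwise Disjoint)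
    (ht : ∀ P ∈ s, ∀ w, IsEndpoint F P w → w ∈ t) : #s ≤ #t := by
  refine card_le_card_of_forall_subsingleton (fun P w ↦ ∃ y, F.Adj w y ∧ s(w, y) ∈ P ∧
      F.dist (F.componentRoot w) y + 1 = F.dist (F.componentRoot w) w)
    (fun P hP ↦ ?_) (fun w _ ↦ ?_)
  · obtain ⟨w, y, hw, hy⟩ := (hpath P hP).exists_isEndpoint_adj_toward_componentRoot hF
    exact ⟨w, ht P hP w hw, y, hy⟩
  · rintro P ⟨hP, y, hy, hyP, hyd⟩ Q ⟨hQ, z, hz, hzQ, hzd⟩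
    obtain rfl := hF.eq_of_adj_of_dist_add_one (F.reachable_componentRoot w) hy hz hyd hzd
    by_contra hne
    exact Set.disjoint_left.1 (hdisj hP hQ hne) hyP hzQ

theorem IsConnectingPathsForest.ncard_le_two_mul_ncard {S : Set V} {Ps : Set (Set (Sym2 V))}
    (hF : F.IsAcyclic) (hPs : IsConnectingPathsForest F S Ps) : Ps.ncard ≤ 2 * S.ncard := by
  classical
  obtain ⟨hpath, hdisj, -, hS, hbranch⟩ := hPs
  obtain hinf | hfin := Ps.infinite_or_finite
  · simp [hinf.ncard]
  have hT : {w | ∃ P ∈ Ps, IsEndpoint F P w}.Finite := by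
    rw [show {w | ∃ P ∈ Ps, IsEndpoint F P w} = ⋃ P ∈ Ps, {w | IsEndpoint F P w} by ext; simp]
    refine hfin.biUnion fun P hP ↦ ?_
    obtain ⟨u, v, huv⟩ := (hpath P hP).exists_setOf_isEndpoint_subset
    exact (Set.toFinite {u, v}).subset huv
  obtain ⟨s, rfl⟩ := hfin.exists_finset_coe
  obtain ⟨t, ht⟩ := hT.exists_finset_coe
  have hmem : ∀ w, w ∈ t ↔ ∃ P ∈ s, IsEndpoint F P w := fun w ↦ Set.ext_iff.1 ht w
  have hSt : S = ↑(t.filter (· ∈ S)) := by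
    ext w
    simpa [hmem] using hS w
  rw [hSt, Set.ncard_coe_finset, Set.ncard_coe_finset]
  refine card_le_two_mul_card_filter_of_incidence (IsEndpoint F) (· ∈ S) (fun P hP ↦ ?_)
    (fun w hw ↦ ?_) (fun w hw hwS ↦ ?_)
    (hF.card_le_card_of_isEndpoint_mem hpath hdisj fun P hP w hw ↦ (hmem w).2 ⟨P, hP, hw⟩)
  · obtain ⟨u, v, huv⟩ := (hpath P hP).exists_setOf_isEndpoint_subset
    refine (card_le_card (t := {u, v}) fun w hw ↦ ?_).trans card_le_two
    simpa using huv ((mem_bipartiteAbove _).1 hw).2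
  · obtain ⟨P, hP, hw⟩ := (hmem w).1 hw
    exact card_pos.2 ⟨P, (mem_bipartiteBelow _).2 ⟨hP, hw⟩⟩
  · obtain ⟨P, hP, hw⟩ := (hmem w).1 hw
    obtain hwS' | ⟨Q, hQ, R, hR, hQP, hRP, hQR, hQw, hRw⟩ := hbranch P hP w hw
    · exact absurd hwS' hwS
    · exact two_lt_card.2 ⟨P, (mem_bipartiteBelow _).2 ⟨hP, hw⟩,
        Q, (mem_bipartiteBelow _).2 ⟨hQ, hQw⟩, R, (mem_bipartiteBelow _).2 ⟨hR, hRw⟩,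
        hQP.symm, hRP.symm, hQR⟩

/-- `N` stands for the non-forest edges `E − F`, and each connecting path contributes one super
edge, so `N.ncard + Ps.ncard` is `|E(G′)|`. -/
theorem contracted_graph_edge_bound_general
    (F : SimpleGraph V) (hF : F.IsAcyclic)
    (N : Set (Sym2 V)) (S : Set V)
    (Ps : Set (Set (Sym2 V))) (hPs : IsConnectingPathsForest F S Ps) :
    N.ncard + Ps.ncard ≤ N.ncard + 2 * S.ncard :=
  Nat.add_le_add_left (hPs.ncard_le_two_mul_ncard hF) _

/-- In the contraction `(G', F') = Contract_S(G, F)` of a graph `G` with forest `F`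
and terminals `S ⊇ end(E − F)`, the edge set of `G'` is the disjoint union of the
non-tree edges `N = E − F` and of the super edges `E(F')` (one per connecting path),
so `|E(G')| = |N| + |Ps_S(F)| ≤ |N| + 2|S|`. -/
theorem contracted_graph_edge_bound [Fintype V]
    (F : SimpleGraph V) (hF : F.IsAcyclic)
    (N : Set (Sym2 V)) (S : Set V) (hS : ∀ e ∈ N, ∀ v ∈ e, v ∈ S)
    (Ps : Set (Set (Sym2 V))) (hPs : IsConnectingPathsForest F S Ps) :
    N.ncard + Ps.ncard ≤ N.ncard + 2 * S.ncard :=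
  contracted_graph_edge_bound_general F hF N S Ps hPs
end
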